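/- arXiv:2404.17432 — 2 statements merged into one kernel-verified Lean document; each statement's English description precedes it below -/
import Mathlib

section
/- Let D be a diagram and let D_1, D_2 ∈ P(D) with D_2 ≺ D_1, where D_2 is obtained from D_1 by moving the cell (r,c) down to (r−j,c) via a single Kohnert move at row r (with 1 ≤ j < r). Then D_2 is covered by D_1 in P(D) if and only if for every row r̃ with r−j < r̃ < r there exists a column c̃ > c such that (r̃, c̃) ∈ D_1. -/
namespace KohnertPaper

abbrev Diagram := Finset (ℕ × ℕ)

/-- `D'` is obtained from `D` by a single Kohnert move: the rightmost cell `(r,c)` of row `r`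
moves down its column to the first empty position `(r',c)` below it. -/
def KMove (D D' : Diagram) : Prop :=
  ∃ r c r' : ℕ, 1 ≤ r' ∧ r' < r ∧ (r, c) ∈ D ∧
    (∀ c', c < c' → (r, c') ∉ D) ∧
    (r', c) ∉ D ∧
    (∀ r₁, r' < r₁ → r₁ < r → (r₁, c) ∈ D) ∧
    D' = insert (r', c) (D.erase (r, c))

/-- `KReach D T` : `T` is obtainable from `D` by a (possibly empty) sequence of Kohnert moves. -/
def KReach : Diagram → Diagram → Prop := Relation.ReflTransGen KMove

/-- The underlying set of the Kohnert poset of `D`. -/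
def KD (D : Diagram) : Set Diagram := {T | KReach D T}

/-- The order of the Kohnert poset: `X ⪯ Y` iff `X` is obtainable from `Y` by Kohnert moves. -/
def KLe (X Y : Diagram) : Prop := KReach Y X

variable {α : Type*}

/-- A chain of the poset `(P, le)`, i.e. a face of the order complex. -/
def IsPChain (le : α → α → Prop) (P : Set α) (s : Finset α) : Prop :=
  ↑s ⊆ P ∧ ∀ x ∈ s, ∀ y ∈ s, le x y ∨ le y x

/-- A facet of the order complex of `(P, le)`: a maximal chain. -/
def IsFacet (le : α → α → Prop) (P : Set α) (s : Finset α) : Prop :=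
  IsPChain le P s ∧ ∀ t : Finset α, IsPChain le P t → s ⊆ t → s = t

/-- Shellability of the order complex of the poset `(P, le)`: there is an ordering
`F_0, …, F_{t-1}` of all its facets such that for each `k ≥ 1` the complex
`(⋃_{i<k} F̄_i) ∩ F̄_k` is pure of dimension `dim F_k − 1`. -/
def Shellable (le : α → α → Prop) (P : Set α) : Prop :=
  ∃ L : List (Finset α), L.Nodup ∧ (∀ s, IsFacet le P s ↔ s ∈ L) ∧
    ∀ k : Fin L.length, 1 ≤ (k : ℕ) →
      ∀ σ : Finset α, σ ⊆ L.get k →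
        (∃ i : Fin L.length, (i : ℕ) < (k : ℕ) ∧ σ ⊆ L.get i) →
        ∃ τ : Finset α, σ ⊆ τ ∧ τ ⊆ L.get k ∧
          (∃ i : Fin L.length, (i : ℕ) < (k : ℕ) ∧ τ ⊆ L.get i) ∧
          τ.card + 1 = (L.get k).card

/-- A poset is pure if all facets of its order complex have the same cardinality. -/
def Pure (le : α → α → Prop) (P : Set α) : Prop :=
  ∀ s t : Finset α, IsFacet le P s → IsFacet le P t → s.card = t.card

/-- A poset is bounded if it has a unique minimal and a unique maximal element. -/
def Bounded (le : α → α → Prop) (P : Set α) : Prop :=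
  (∃ m ∈ P, ∀ x ∈ P, le m x) ∧ ∃ M ∈ P, ∀ x ∈ P, le x M

/-- `y` covers `x` in the poset `(P, le)`. -/
def CoversIn (le : α → α → Prop) (P : Set α) (x y : α) : Prop :=
  x ∈ P ∧ y ∈ P ∧ le x y ∧ x ≠ y ∧ ∀ z ∈ P, le x z → le z y → z = x ∨ z = y

/-- The closed interval `[x,y]` of `(P, le)`. -/
def intervalSet (le : α → α → Prop) (P : Set α) (x y : α) : Set α :=
  {z ∈ P | le x z ∧ le z y}

/-- A saturated (maximal) chain of the interval `[x,y]`, recorded as a list going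
from `x` up to `y` through covering relations of the interval. -/
def IsSatChain (le : α → α → Prop) (P : Set α) (x y : α) (c : List α) : Prop :=
  c ≠ [] ∧ c.head? = some x ∧ c.getLast? = some y ∧
    List.Chain' (CoversIn le (intervalSet le P x y)) c

/-- The word of edge labels along a chain. -/
def labelWord (lab : α → α → ℤ) (c : List α) : List ℤ :=
  (c.zip c.tail).map fun p => lab p.1 p.2

/-- EL-shellability: there is an integer edge labeling such that every interval `[x,y]`
has a unique rising maximal chain, which is lexicographically strictly smaller than every
other maximal chain of the interval. -/
def ELShellable (le : α → α → Prop) (P : Set α) : Prop :=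
  ∃ lab : α → α → ℤ,
    ∀ x ∈ P, ∀ y ∈ P, le x y →
      ∃ c : List α, IsSatChain le P x y c ∧
        List.Pairwise (· ≤ ·) (labelWord lab c) ∧
        (∀ c', IsSatChain le P x y c' → List.Pairwise (· ≤ ·) (labelWord lab c') → c' = c) ∧
        ∀ c', IsSatChain le P x y c' → c' ≠ c →
          List.Lex (· < ·) (labelWord lab c) (labelWord lab c')

/-- The diagram `H(r₁,r₂;C)`. -/
def hookSeed (r1 r2 : ℕ) (C : Finset ℕ) (hC : C.Nonempty) : Diagram :=
  C.image (fun c => (r2, c)) ∪ (Finset.Icc r1 r2).image fun j => (j, C.max' hC)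

/-- A hook diagram: a diagram obtainable from some `H(r₁,r₂;C)` by Kohnert moves. -/
def IsHookDiagram (D : Diagram) : Prop :=
  ∃ (r1 r2 : ℕ) (C : Finset ℕ) (hC : C.Nonempty),
    1 ≤ r1 ∧ r1 ≤ r2 ∧ (∀ c ∈ C, 1 ≤ c) ∧ KReach (hookSeed r1 r2 C hC) D

/-- The key diagram of the weak composition `(a 1, …, a n)`. -/
def keyDiagram (n : ℕ) (a : ℕ → ℕ) : Diagram :=
  (Finset.Icc 1 n).biUnion fun i => (Finset.Icc 1 (a i)).image fun j => (i, j)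

/-- Number of cells of `T` in row `r`. -/
def rowCount (T : Diagram) (r : ℕ) : ℕ := (T.filter fun p => p.1 = r).card

/-- The Kohnert polynomial of `D` is multiplicity free iff distinct diagrams of `KD(D)`
have distinct weights (row-count vectors). -/
def MultFree (D : Diagram) : Prop :=
  ∀ T1 ∈ KD D, ∀ T2 ∈ KD D, (∀ r, rowCount T1 r = rowCount T2 r) → T1 = T2

/-- The key diagram of a weak composition given as a list. -/
def keyDiagramL (l : List ℕ) : Diagram := keyDiagram l.length fun i => l.getD (i - 1) 0

/-!
A Kohnert move lowers one cell inside its column, so it strictly decreases the sum of the row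
indices (hence reachability is antisymmetric) and weakly decreases, for every column `c'` and
height `t`, the number of cells of column `c'` in rows `≥ t`; moving `(r, c)` to `(s, c)`, with
`s = r - j`, lowers exactly the counts with `c' = c` and `s < t ≤ r`. Consequently the first move
of any chain from `D₁` down to `D₂` moves a cell of column `c` from a row in `(s, r]` to a row in
`[s, r)`. If every row strictly between `s` and `r` has a cell right of column `c`, the moved cell
can only be the rightmost cell `(r, c)`, and it can only land on the empty position `(s, c)`, so
the chain has a single step. If some row `m` in between has no such cell, moving `(m, c)` to
`(s, c)` and then `(r, c)` to `(m, c)` passes through a diagram strictly between `D₂` and `D₁`.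
-/

def rowSum (X : Diagram) : ℕ := ∑ p ∈ X, p.1

lemma KMove.rowSum_lt {X Y : Diagram} (h : KMove X Y) : rowSum Y < rowSum X := by
  obtain ⟨r, c, s, -, hsr, hrc, -, hsc, -, rfl⟩ := h
  have hsc' : (s, c) ∉ X.erase (r, c) := fun h => hsc (Finset.mem_of_mem_erase h)
  have hsplit := Finset.sum_erase_add X (fun p => p.1) hrc
  rw [rowSum, Finset.sum_insert hsc', rowSum, ← hsplit]
  omega

lemma KMove.ne {X Y : Diagram} (h : KMove X Y) : Y ≠ X :=
  fun hYX => (hYX ▸ h.rowSum_lt).false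

lemma KReach.rowSum_le {X Y : Diagram} (h : KReach X Y) : rowSum Y ≤ rowSum X := by
  induction h with
  | refl => exact le_rfl
  | tail _ hmove ih => exact hmove.rowSum_lt.le.trans ih

lemma KReach.antisymm {X Y : Diagram} (hXY : KReach X Y) (hYX : KReach Y X) : X = Y := by
  rcases hXY.cases_head with rfl | ⟨Z, hXZ, hZY⟩
  · rfl
  · have := hXZ.rowSum_lt
    have := KReach.rowSum_le hZY
    have := hYX.rowSum_le
    omega

def colCountFrom (X : Diagram) (c t : ℕ) : ℕ := (X.filter fun p => p.2 = c ∧ t ≤ p.1).card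

lemma colCountFrom_move {X : Diagram} {r c s : ℕ} (hrc : (r, c) ∈ X) (hsc : (s, c) ∉ X)
    (hsr : s < r) (c' t : ℕ) :
    colCountFrom (insert (s, c) (X.erase (r, c))) c' t +
        (if c = c' ∧ s < t ∧ t ≤ r then 1 else 0) = colCountFrom X c' t := by
  unfold colCountFrom
  rw [Finset.filter_insert, Finset.filter_erase]
  set F := X.filter fun p => p.2 = c' ∧ t ≤ p.1
  have hsF : (s, c) ∉ F.erase (r, c) := fun h => hsc (Finset.mem_filter.1 (Finset.mem_of_mem_erase h)).1
  by_cases hlow : c = c' ∧ t ≤ s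
  · have hrF : (r, c) ∈ F := Finset.mem_filter.2 ⟨hrc, hlow.1, by omega⟩
    rw [if_pos hlow, if_neg (by omega), Finset.card_insert_of_notMem hsF,
      Finset.card_erase_add_one hrF]
  · rw [if_neg hlow]
    by_cases hwin : c = c' ∧ s < t ∧ t ≤ r
    · have hrF : (r, c) ∈ F := Finset.mem_filter.2 ⟨hrc, hwin.1, hwin.2.2⟩
      rw [if_pos hwin, Finset.card_erase_add_one hrF]
    · have hrF : (r, c) ∉ F := fun h => by
        have := (Finset.mem_filter.1 h).2
        simp only at this
        omega
      rw [if_neg hwin, Finset.erase_eq_of_notMem hrF, Nat.add_zero]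

lemma KMove.colCountFrom_le {X Y : Diagram} (h : KMove X Y) (c t : ℕ) :
    colCountFrom Y c t ≤ colCountFrom X c t := by
  obtain ⟨r₀, c₀, s₀, -, hsr, hrc, -, hsc, -, rfl⟩ := h
  exact (Nat.le_add_right _ _).trans (colCountFrom_move hrc hsc hsr c t).le

lemma KReach.colCountFrom_le {X Y : Diagram} (h : KReach X Y) (c t : ℕ) :
    colCountFrom Y c t ≤ colCountFrom X c t := by
  induction h with
  | refl => exact le_rfl
  | tail _ hmove ih => exact (hmove.colCountFrom_le c t).trans ih

lemma move_window_subset_of_kReach {X : Diagram} {r c s r₀ c₀ s₀ : ℕ}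
    (hrc : (r, c) ∈ X) (hsc : (s, c) ∉ X) (hsr : s < r)
    (hrc₀ : (r₀, c₀) ∈ X) (hsc₀ : (s₀, c₀) ∉ X) (hsr₀ : s₀ < r₀)
    (hreach : KReach (insert (s₀, c₀) (X.erase (r₀, c₀))) (insert (s, c) (X.erase (r, c)))) :
    c₀ = c ∧ s ≤ s₀ ∧ r₀ ≤ r := by
  have hwindow : ∀ t, s₀ < t → t ≤ r₀ → c = c₀ ∧ s < t ∧ t ≤ r := fun t ht₀ ht₁ => by
    have hY := colCountFrom_move hrc hsc hsr c₀ t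
    have hX₀ := colCountFrom_move hrc₀ hsc₀ hsr₀ c₀ t
    have hle := hreach.colCountFrom_le c₀ t
    rw [if_pos ⟨rfl, ht₀, ht₁⟩] at hX₀
    by_contra hout
    rw [if_neg hout] at hY
    omega
  obtain ⟨hc, -, hr⟩ := hwindow r₀ hsr₀ le_rfl
  obtain ⟨-, hs, -⟩ := hwindow (s₀ + 1) (Nat.lt_succ_self s₀) hsr₀
  exact ⟨hc.symm, by omega, hr⟩

lemma insert_erase_insert_erase {X : Diagram} {a b p : ℕ × ℕ} (hb : b ∈ X) (hap : a ≠ p)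
    (hbp : b ≠ p) : insert b ((insert a (X.erase b)).erase p) = insert a (X.erase p) := by
  ext q
  simp only [Finset.mem_insert, Finset.mem_erase]
  grind

lemma kMove_kMove_of_row_empty_right {X : Diagram} {r c s m : ℕ} (hs : 1 ≤ s) (hsm : s < m)
    (hmr : m < r) (hrc : (r, c) ∈ X) (hright : ∀ c', c < c' → (r, c') ∉ X) (hsc : (s, c) ∉ X)
    (hfill : ∀ r₁, s < r₁ → r₁ < r → (r₁, c) ∈ X) (hm : ∀ c', c < c' → (m, c') ∉ X) :
    KMove X (insert (s, c) (X.erase (m, c))) ∧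
      KMove (insert (s, c) (X.erase (m, c))) (insert (s, c) (X.erase (r, c))) := by
  have hmc : (m, c) ∈ X := hfill m hsm hmr
  refine ⟨⟨m, c, s, hs, hsm, hmc, hm, hsc, fun r₁ h₁ h₂ => hfill r₁ h₁ (h₂.trans hmr), rfl⟩,
    ⟨r, c, m, by omega, hmr, ?_, ?_, ?_, ?_, ?_⟩⟩
  · simp only [Finset.mem_insert, Finset.mem_erase]
    grind
  · simp only [Finset.mem_insert, Finset.mem_erase]
    grind
  · simp only [Finset.mem_insert, Finset.mem_erase]
    grind
  · intro r₁ h₁ h₂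
    simp only [Finset.mem_insert, Finset.mem_erase]
    grind
  · exact (insert_erase_insert_erase hmc (by grind) (by grind)).symm

lemma eq_or_eq_of_kReach_of_rows_occupied {X T : Diagram} {r c s : ℕ} (hsr : s < r)
    (hrc : (r, c) ∈ X) (hsc : (s, c) ∉ X) (hfill : ∀ r₁, s < r₁ → r₁ < r → (r₁, c) ∈ X)
    (hocc : ∀ m, s < m → m < r → ∃ c', c < c' ∧ (m, c') ∈ X)
    (hXT : KReach X T) (hTY : KReach T (insert (s, c) (X.erase (r, c)))) :
    T = X ∨ T = insert (s, c) (X.erase (r, c)) := by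
  rcases hXT.cases_head with rfl | ⟨Z, hXZ, hZT⟩
  · exact .inl rfl
  obtain ⟨r₀, c₀, s₀, -, hsr₀, hrc₀, hright₀, hsc₀, hfill₀, rfl⟩ := hXZ
  obtain ⟨rfl, hs, hr⟩ :=
    move_window_subset_of_kReach hrc hsc hsr hrc₀ hsc₀ hsr₀ (hZT.trans hTY)
  have hr₀ : r₀ = r := by
    by_contra hne
    obtain ⟨c', hc', hmem⟩ := hocc r₀ (by omega) (by omega)
    exact hright₀ c' hc' hmem
  have hs₀ : s₀ = s := by
    by_contra hne
    exact hsc₀ (hfill s₀ (by omega) (by omega))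
  subst hr₀ hs₀
  exact .inr (KReach.antisymm hTY hZT)

theorem stmt_5_general (D1 : Diagram)
    (r c j : ℕ) (hj1 : 1 ≤ j) (hjr : j < r)
    (hcell : (r, c) ∈ D1)
    (hright : ∀ c', c < c' → (r, c') ∉ D1)
    (hempty : (r - j, c) ∉ D1)
    (hfill : ∀ r₁, r - j < r₁ → r₁ < r → (r₁, c) ∈ D1)
    (D2 : Diagram) (hD2 : D2 = insert (r - j, c) (D1.erase (r, c))) :
    (D2 ≠ D1 ∧ KReach D1 D2 ∧
        ∀ T : Diagram, KReach D1 T → KReach T D2 → T = D1 ∨ T = D2) ↔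
      ∀ rr, r - j < rr → rr < r → ∃ cc, c < cc ∧ (rr, cc) ∈ D1 := by
  subst hD2
  constructor
  · rintro ⟨-, -, hcover⟩ m hsm hmr
    by_contra! hm
    obtain ⟨h₁, h₂⟩ :=
      kMove_kMove_of_row_empty_right (by omega) hsm hmr hcell hright hempty hfill hm
    rcases hcover _ (.single h₁) (.single h₂) with h | h
    · exact h₁.ne h
    · exact h₂.ne h.symm
  · intro hocc
    have hmove : KMove D1 (insert (r - j, c) (D1.erase (r, c))) :=
      ⟨r, c, r - j, by omega, by omega, hcell, hright, hempty, hfill, rfl⟩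
    exact ⟨hmove.ne, .single hmove, fun T hT₁ hT₂ =>
      eq_or_eq_of_kReach_of_rows_occupied (by omega) hcell hempty hfill hocc hT₁ hT₂⟩

/-- Suppose `D₂ = D₁ ↓^{(r,c)}_{(r−j,c)}` is obtained from `D₁ ∈ P(D)` by a single Kohnert
move at row `r` (with `1 ≤ j < r`). Then `D₂ ⋖ D₁` in `P(D)` iff every row strictly between
`r−j` and `r` contains a cell of `D₁` strictly to the right of column `c`. -/
theorem stmt_5 (D D1 : Diagram) (hD1 : KReach D D1)
    (r c j : ℕ) (hj1 : 1 ≤ j) (hjr : j < r)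
    (hcell : (r, c) ∈ D1)
    (hright : ∀ c', c < c' → (r, c') ∉ D1)
    (hempty : (r - j, c) ∉ D1)
    (hfill : ∀ r₁, r - j < r₁ → r₁ < r → (r₁, c) ∈ D1)
    (D2 : Diagram) (hD2 : D2 = insert (r - j, c) (D1.erase (r, c))) :
    (D2 ≠ D1 ∧ KReach D1 D2 ∧
        ∀ T : Diagram, KReach D1 T → KReach T D2 → T = D1 ∨ T = D2) ↔
      ∀ rr, r - j < rr → rr < r → ∃ cc, c < cc ∧ (rr, cc) ∈ D1 :=
  stmt_5_general D1 r c j hj1 hjr hcell hright hempty hfill D2 hD2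

end KohnertPaper
end

section
/- Let D be a diagram. Suppose there exists D* ∈ P(D) and r, c_1, c_2 ∈ ℕ with c_1 < c_2 such that: (r+1,c_1), (r+2,c_2) ∈ D*; (r+2,c̃) ∉ D* for all c̃ > c_2 and (r,c_2) ∉ D*; and (r+1,c̃) ∉ D* for all c̃ > c_1 and (r,c_1) ∉ D*. Then the Kohnert poset P(D) is not shellable. -/
/-!
Let `E` be `D*` with the cells `(r+1, c₁)` and `(r+2, c₂)` moved down to row `r`, and write
`(a, b)` for `D*` with these two cells in rows `a` and `b`. The interval `[E, D*]` of `P(D)` is a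
hexagon: moving the cell of column `c₁` first gives `D* > (r, r+2) > (r, r+1) > E`, moving the cell
of column `c₂` first gives `D* > (r+1, r+1) > (r+1, r) > E`, and the two sides are incomparable
because the cell `(r+1, c₁)` cannot move while `(r+1, c₂)` is occupied. The interval is pinned down
by the number of cells of each column at or above each row, which never increases under a move.

An interval whose open part consists of two incomparable chains `A`, `B` with at least two elements
each obstructs shellability. Every facet through `E` and `D*` contains all of `A` or all of `B`; say
the first such facet of a shelling contains `A`, and let `F` be the first one containing `B`. The
shelling condition yields a face of `F` of codimension one lying in an earlier facet `F'`. That face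
still contains `E`, `D*` and a vertex of `B`, so `F'` contains `B`, contradicting the choice of `F`.
-/

namespace KohnertPaper

variable {α : Type*}

section Order

variable {le : α → α → Prop} {P : Set α}

theorem IsPChain.insert [DecidableEq α] [Std.Refl le] {s : Finset α} (hs : IsPChain le P s)
    {w : α} (hw : w ∈ P) (hcomp : ∀ z ∈ s, le z w ∨ le w z) : IsPChain le P (insert w s) := by
  refine ⟨by simpa [Set.insert_subset_iff] using ⟨hw, hs.1⟩, ?_⟩
  simp only [Finset.mem_insert]
  rintro x (rfl | hx) y (rfl | hy)
  · exact Or.inl (refl_of le _)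
  · exact (hcomp y hy).symm
  · exact hcomp x hx
  · exact hs.2 x hx y hy

theorem IsFacet.mem_of_forall_comparable [Std.Refl le] {F : Finset α} (hF : IsFacet le P F)
    {w : α} (hw : w ∈ P) (hcomp : ∀ z ∈ F, le z w ∨ le w z) : w ∈ F := by
  classical
  rw [hF.2 _ (hF.1.insert hw hcomp) (Finset.subset_insert w F)]
  exact Finset.mem_insert_self w F

theorem exists_isFacet_superset {N : ℕ} (hbound : ∀ t, IsPChain le P t → t.card ≤ N)
    {s : Finset α} (hs : IsPChain le P s) : ∃ F, IsFacet le P F ∧ s ⊆ F := by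
  obtain ⟨F, ⟨hF, hsF⟩, hmax⟩ := (measure fun t : Finset α => N - t.card).wf.has_min
    {t | IsPChain le P t ∧ s ⊆ t} ⟨s, hs, subset_rfl⟩
  refine ⟨F, ⟨hF, fun t ht hFt => Finset.eq_of_subset_of_card_le hFt ?_⟩, hsF⟩
  have hlt := hmax t ⟨ht, hsF.trans hFt⟩
  have := hbound t ht
  change ¬ N - t.card < N - F.card at hlt
  omega

def IsShelling (le : α → α → Prop) (P : Set α) (L : List (Finset α)) : Prop :=
  L.Nodup ∧ (∀ s, IsFacet le P s ↔ s ∈ L) ∧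
    ∀ k : Fin L.length, 1 ≤ (k : ℕ) →
      ∀ σ : Finset α, σ ⊆ L.get k →
        (∃ i : Fin L.length, (i : ℕ) < (k : ℕ) ∧ σ ⊆ L.get i) →
        ∃ τ : Finset α, σ ⊆ τ ∧ τ ⊆ L.get k ∧
          (∃ i : Fin L.length, (i : ℕ) < (k : ℕ) ∧ τ ⊆ L.get i) ∧
          τ.card + 1 = (L.get k).card

namespace IsShelling

variable {L : List (Finset α)}

theorem isFacet_get (hL : IsShelling le P L) (i : Fin L.length) : IsFacet le P (L.get i) :=
  (hL.2.1 _).2 (List.get_mem L i)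

theorem exists_min_index (hL : IsShelling le P L) {Q : Finset α → Prop} {F : Finset α}
    (hF : IsFacet le P F) (hQ : Q F) : ∃ i, Q (L.get i) ∧ ∀ i' < i, ¬ Q (L.get i') := by
  obtain ⟨i₀, rfl⟩ := List.mem_iff_get.1 ((hL.2.1 F).1 hF)
  obtain ⟨i, hi, hmin⟩ := wellFounded_lt.has_min {i | Q (L.get i)} ⟨i₀, hQ⟩
  exact ⟨i, hi, fun i' hi' hQ' => hmin i' hQ' hi'⟩

end IsShelling

theorem mem_or_mem_of_card_add_one [DecidableEq α] {τ F : Finset α} (hτF : τ ⊆ F)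
    (hcard : τ.card + 1 = F.card) {b₁ b₂ : α} (h₁ : b₁ ∈ F) (h₂ : b₂ ∈ F) (hne : b₁ ≠ b₂) :
    b₁ ∈ τ ∨ b₂ ∈ τ := by
  by_contra! h
  have := Finset.card_le_card (Finset.insert_subset h₁ (Finset.insert_subset h₂ hτF))
  rw [Finset.card_insert_of_notMem (by simp [hne, h.1]), Finset.card_insert_of_notMem h.2] at this
  omega

structure IsIntervalSplit (le : α → α → Prop) (P : Set α) (x y : α) (A B : Set α) : Prop where
  left_subset : A ⊆ intervalSet le P x y
  right_subset : B ⊆ intervalSet le P x y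
  isChain_left : IsChain le A
  isChain_right : IsChain le B
  incomparable : ∀ a ∈ A, ∀ b ∈ B, ¬ le a b ∧ ¬ le b a
  mem_of_mem_intervalSet : ∀ z ∈ intervalSet le P x y, z = x ∨ z = y ∨ z ∈ A ∨ z ∈ B

namespace IsIntervalSplit

variable {x y : α} {A B : Set α}

theorem symm (h : IsIntervalSplit le P x y A B) : IsIntervalSplit le P x y B A where
  left_subset := h.right_subset
  right_subset := h.left_subset
  isChain_left := h.isChain_right
  isChain_right := h.isChain_left
  incomparable b hb a ha := (h.incomparable a ha b hb).symm
  mem_of_mem_intervalSet z hz := by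
    rcases h.mem_of_mem_intervalSet z hz with h | h | h | h <;> tauto

theorem notMem_of_mem (h : IsIntervalSplit le P x y A B) {s : Finset α} (hs : IsPChain le P s)
    {a b : α} (ha : a ∈ A) (hb : b ∈ B) (has : a ∈ s) : b ∉ s := fun hbs =>
  (hs.2 a has b hbs).elim (h.incomparable a ha b hb).1 (h.incomparable a ha b hb).2

variable [IsPreorder α le]

theorem subset_of_isFacet (h : IsIntervalSplit le P x y A B) {F : Finset α}
    (hF : IsFacet le P F) (hx : x ∈ F) (hy : y ∈ F) (hB : ∀ b ∈ B, b ∉ F) : A ⊆ F := by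
  intro a ha
  obtain ⟨haP, hxa, hay⟩ := h.left_subset ha
  refine hF.mem_of_forall_comparable haP fun z hz => ?_
  rcases hF.1.2 z hz x hx with hzx | hxz
  · exact Or.inl (trans_of le hzx hxa)
  rcases hF.1.2 z hz y hy with hzy | hyz
  · rcases h.mem_of_mem_intervalSet z ⟨hF.1.1 hz, hxz, hzy⟩ with rfl | rfl | hzA | hzB
    · exact Or.inl hxa
    · exact Or.inr hay
    · exact h.isChain_left.total hzA ha
    · exact absurd hz (hB z hzB)
  · exact Or.inr (trans_of le hay hyz)

theorem subset_or_subset_of_isFacet (h : IsIntervalSplit le P x y A B) {F : Finset α}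
    (hF : IsFacet le P F) (hx : x ∈ F) (hy : y ∈ F) : A ⊆ F ∨ B ⊆ F := by
  by_cases hB : ∃ b ∈ B, b ∈ F
  · obtain ⟨b, hb, hbF⟩ := hB
    exact Or.inr (h.symm.subset_of_isFacet hF hx hy fun a ha haF =>
      h.notMem_of_mem hF.1 ha hb haF hbF)
  · simp only [not_exists, not_and] at hB
    exact Or.inl (h.subset_of_isFacet hF hx hy hB)

theorem exists_isFacet (h : IsIntervalSplit le P x y A B) {N : ℕ}
    (hbound : ∀ t, IsPChain le P t → t.card ≤ N) (hx : x ∈ P) (hy : y ∈ P)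
    (hA : A.Nonempty) (hB : B.Nonempty) :
    ∃ F, IsFacet le P F ∧ x ∈ F ∧ y ∈ F ∧ A ⊆ F := by
  classical
  obtain ⟨a, ha⟩ := hA
  obtain ⟨b, hb⟩ := hB
  obtain ⟨haP, hxa, hay⟩ := h.left_subset ha
  have hchain : IsPChain le P {x, a, y} := by
    refine ⟨by simp [Set.insert_subset_iff, hx, haP, hy], ?_⟩
    simp only [Finset.mem_insert, Finset.mem_singleton]
    rintro _ (rfl | rfl | rfl) _ (rfl | rfl | rfl) <;>
      simp [refl_of, hxa, hay, trans_of le hxa hay]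
  obtain ⟨F, hF, hsub⟩ := exists_isFacet_superset hbound hchain
  have hxF : x ∈ F := hsub (by simp)
  have haF : a ∈ F := hsub (by simp)
  have hyF : y ∈ F := hsub (by simp)
  exact ⟨F, hF, hxF, hyF, (h.subset_or_subset_of_isFacet hF hxF hyF).resolve_right
    fun hBF => h.notMem_of_mem hF.1 ha hb haF (hBF hb)⟩

theorem false_of_isShelling (h : IsIntervalSplit le P x y A B) (hA : A.Nonempty)
    (hB : B.Nontrivial) {L : List (Finset α)} (hL : IsShelling le P L) {j k : Fin L.length}
    (hjk : j < k) (hj : x ∈ L.get j ∧ y ∈ L.get j) (hk : x ∈ L.get k ∧ y ∈ L.get k ∧ B ⊆ L.get k)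
    (hmin : ∀ i < k, ¬ (x ∈ L.get i ∧ y ∈ L.get i ∧ B ⊆ L.get i)) : False := by
  classical
  obtain ⟨τ, hστ, hτk, ⟨i, hik, hτi⟩, hcard⟩ := hL.2.2 k (Nat.one_le_of_lt hjk)
    (L.get j ∩ L.get k) Finset.inter_subset_right ⟨j, hjk, Finset.inter_subset_left⟩
  have hxτ : x ∈ τ := hστ (Finset.mem_inter.2 ⟨hj.1, hk.1⟩)
  have hyτ : y ∈ τ := hστ (Finset.mem_inter.2 ⟨hj.2, hk.2.1⟩)
  -- `τ` misses only one element of the facet `L.get k`, so it still meets `B`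
  obtain ⟨b, hb, hbτ⟩ : ∃ b ∈ B, b ∈ τ := by
    obtain ⟨b₁, hb₁, b₂, hb₂, hne⟩ := hB
    exact (mem_or_mem_of_card_add_one hτk hcard (hk.2.2 hb₁) (hk.2.2 hb₂) hne).elim
      (⟨b₁, hb₁, ·⟩) (⟨b₂, hb₂, ·⟩)
  rcases h.subset_or_subset_of_isFacet (hL.isFacet_get i) (hτi hxτ) (hτi hyτ) with hAi | hBi
  · obtain ⟨a, ha⟩ := hA
    exact h.notMem_of_mem (hL.isFacet_get i).1 ha hb (hAi ha) (hτi hbτ)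
  · exact hmin i hik ⟨hτi hxτ, hτi hyτ, hBi⟩

theorem false_of_isShelling_of_first (h : IsIntervalSplit le P x y A B) (hA : A.Nonempty)
    (hB : B.Nontrivial) {N : ℕ} (hbound : ∀ t, IsPChain le P t → t.card ≤ N) (hx : x ∈ P)
    (hy : y ∈ P) {L : List (Finset α)} (hL : IsShelling le P L) {j : Fin L.length}
    (hj : x ∈ L.get j ∧ y ∈ L.get j) (hjA : A ⊆ L.get j)
    (hjmin : ∀ i < j, ¬ (x ∈ L.get i ∧ y ∈ L.get i)) : False := by
  obtain ⟨F, hF, hFB⟩ := h.symm.exists_isFacet hbound hx hy hB.nonempty hA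
  obtain ⟨k, hk, hkmin⟩ := hL.exists_min_index
    (Q := fun F => x ∈ F ∧ y ∈ F ∧ B ⊆ F) hF hFB
  have hjk : j < k := by
    refine lt_of_le_of_ne (not_lt.1 fun hkj => hjmin k hkj ⟨hk.1, hk.2.1⟩) ?_
    rintro rfl
    obtain ⟨a, ha⟩ := hA
    obtain ⟨b, hb⟩ := hB.nonempty
    exact h.notMem_of_mem (hL.isFacet_get j).1 ha hb (hjA ha) (hk.2.2 hb)
  exact h.false_of_isShelling hA hB hL hjk hj hk hkmin

end IsIntervalSplit

theorem not_shellable_of_isIntervalSplit [IsPreorder α le] {N : ℕ}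
    (hbound : ∀ t, IsPChain le P t → t.card ≤ N) {x y : α} {A B : Set α} (hx : x ∈ P)
    (hy : y ∈ P) (h : IsIntervalSplit le P x y A B) (hA : A.Nontrivial) (hB : B.Nontrivial) :
    ¬ Shellable le P := by
  rintro ⟨L, hL : IsShelling le P L⟩
  obtain ⟨F, hF, hFxy⟩ := h.exists_isFacet hbound hx hy hA.nonempty hB.nonempty
  obtain ⟨j, hj, hjmin⟩ := hL.exists_min_index (Q := fun F => x ∈ F ∧ y ∈ F) hF
    ⟨hFxy.1, hFxy.2.1⟩
  rcases h.subset_or_subset_of_isFacet (hL.isFacet_get j) hj.1 hj.2 with hjA | hjB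
  · exact h.false_of_isShelling_of_first hA.nonempty hB hbound hx hy hL hj hjA hjmin
  · exact h.symm.false_of_isShelling_of_first hB.nonempty hA hbound hx hy hL hj hjB hjmin

end Order

section Columns

def column (X : Diagram) (c : ℕ) : Finset ℕ := (X.filter (·.2 = c)).image Prod.fst

@[simp]
theorem mem_column {X : Diagram} {c ρ : ℕ} : ρ ∈ column X c ↔ (ρ, c) ∈ X := by
  simp [column]

theorem column_insert (X : Diagram) (ρ c c' : ℕ) :
    column (insert (ρ, c) X) c' = if c' = c then insert ρ (column X c') else column X c' := by
  ext ρ'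
  split_ifs with h
  · subst h
    simp
  · simp [h]

theorem column_erase (X : Diagram) (ρ c c' : ℕ) :
    column (X.erase (ρ, c)) c' = if c' = c then (column X c').erase ρ else column X c' := by
  ext ρ'
  split_ifs with h <;> simp [h]

theorem eq_of_column_eq {X Y : Diagram} (h : ∀ c, column X c = column Y c) : X = Y := by
  ext ⟨ρ, c⟩
  rw [← mem_column, ← mem_column, h]

def countAtLeast (S : Finset ℕ) (t : ℕ) : ℕ := (S.filter (t ≤ ·)).card

theorem countAtLeast_zero (S : Finset ℕ) : countAtLeast S 0 = S.card := by
  simp [countAtLeast]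

theorem countAtLeast_insert {R : Finset ℕ} {a : ℕ} (ha : a ∉ R) (t : ℕ) :
    countAtLeast (insert a R) t = countAtLeast R t + if t ≤ a then 1 else 0 := by
  unfold countAtLeast
  rw [Finset.filter_insert]
  split_ifs
  · rw [Finset.card_insert_of_notMem (by simp [ha])]
  · rfl

theorem countAtLeast_eq_succ_add (S : Finset ℕ) (ρ : ℕ) :
    countAtLeast S ρ = countAtLeast S (ρ + 1) + if ρ ∈ S then 1 else 0 := by
  unfold countAtLeast
  split_ifs with h
  · rw [← Finset.card_insert_of_notMem (s := S.filter (ρ + 1 ≤ ·)) (a := ρ) (by simp)]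
    congr 1
    ext x
    simp only [Finset.mem_filter, Finset.mem_insert]
    grind
  · congr 1
    ext x
    simp only [Finset.mem_filter]
    grind

theorem mem_iff_countAtLeast_lt {S : Finset ℕ} {ρ : ℕ} :
    ρ ∈ S ↔ countAtLeast S (ρ + 1) < countAtLeast S ρ := by
  rw [countAtLeast_eq_succ_add S ρ]
  split_ifs with h <;> simp [h]

theorem countAtLeast_insert_erase {S : Finset ℕ} {ρ ρ' : ℕ} (hρ : ρ ∈ S) (hρ' : ρ' ∉ S) (t : ℕ) :
    countAtLeast (insert ρ' (S.erase ρ)) t + (if t ≤ ρ then 1 else 0) =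
      countAtLeast S t + if t ≤ ρ' then 1 else 0 := by
  conv_rhs => rw [← Finset.insert_erase hρ]
  rw [countAtLeast_insert (fun h => hρ' (Finset.mem_of_mem_erase h)),
    countAtLeast_insert (Finset.notMem_erase ρ S)]
  omega

theorem le_of_countAtLeast_insert_le {R : Finset ℕ} {a a' : ℕ} (ha' : a' ∉ R)
    (h : countAtLeast (insert a' R) a' ≤ countAtLeast (insert a R) a') : a' ≤ a := by
  rw [countAtLeast_insert ha', if_pos le_rfl] at h
  by_cases ha : a ∈ R
  · rw [Finset.insert_eq_of_mem ha] at h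
    omega
  · rw [countAtLeast_insert ha] at h
    split_ifs at h with h'
    · exact h'
    · omega

theorem eq_of_countAtLeast_le_of_le {S Z : Finset ℕ} (h₁ : ∀ t, countAtLeast S t ≤ countAtLeast Z t)
    (h₂ : ∀ t, countAtLeast Z t ≤ countAtLeast S t) : Z = S := by
  ext ρ
  rw [mem_iff_countAtLeast_lt, mem_iff_countAtLeast_lt, le_antisymm (h₂ ρ) (h₁ ρ),
    le_antisymm (h₂ (ρ + 1)) (h₁ (ρ + 1))]

theorem exists_eq_insert_of_countAtLeast_le {R Z : Finset ℕ} {lo hi : ℕ} (hle : lo ≤ hi)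
    (hR : ∀ ρ, lo ≤ ρ → ρ ≤ hi → ρ ∉ R)
    (hlo : ∀ t, countAtLeast (insert lo R) t ≤ countAtLeast Z t)
    (hhi : ∀ t, countAtLeast Z t ≤ countAtLeast (insert hi R) t) :
    ∃ m, lo ≤ m ∧ m ≤ hi ∧ Z = insert m R := by
  have hloR := hR lo le_rfl hle
  have hhiR := hR hi hle le_rfl
  have hcount : ∀ t, t ≤ lo ∨ hi < t → countAtLeast Z t = countAtLeast (insert lo R) t := by
    intro t ht
    have h₁ := hlo t
    have h₂ := hhi t
    rw [countAtLeast_insert hloR] at h₁ ⊢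
    rw [countAtLeast_insert hhiR] at h₂
    split_ifs at h₁ h₂ ⊢ <;> omega
  have hmem : ∀ ρ, ρ < lo ∨ hi < ρ → (ρ ∈ Z ↔ ρ ∈ R) := by
    intro ρ hρ
    rw [mem_iff_countAtLeast_lt, hcount ρ (by omega), hcount (ρ + 1) (by omega),
      ← mem_iff_countAtLeast_lt, Finset.mem_insert, or_iff_right (by omega)]
  have hRZ : R ⊆ Z := fun ρ hρ =>
    (hmem ρ (by by_contra! h; exact hR ρ h.1 h.2 hρ)).2 hρ
  have hcard : (Z \ R).card = 1 := by
    rw [Finset.card_sdiff_of_subset hRZ, ← countAtLeast_zero, hcount 0 (Or.inl (Nat.zero_le _)),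
      countAtLeast_zero, Finset.card_insert_of_notMem hloR, Nat.add_sub_cancel_left]
  obtain ⟨m, hm⟩ := Finset.card_eq_one.1 hcard
  obtain ⟨hmZ, hmR⟩ := Finset.mem_sdiff.1 (hm ▸ Finset.mem_singleton_self m)
  refine ⟨m, ?_, ?_, ?_⟩
  · by_contra! h
    exact hmR ((hmem m (Or.inl h)).1 hmZ)
  · by_contra! h
    exact hmR ((hmem m (Or.inr h)).1 hmZ)
  · rw [← Finset.sdiff_union_of_subset hRZ, hm, Finset.insert_eq]

end Columns

section Kohnert

instance : IsPreorder Diagram KLe where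
  refl _ := Relation.ReflTransGen.refl
  trans _ _ _ h₁ h₂ := h₂.trans h₁

theorem kMove_insert_erase {X : Diagram} {ρ c : ℕ} (hρ : 1 ≤ ρ) (hmem : (ρ + 1, c) ∈ X)
    (hright : ∀ c', c < c' → (ρ + 1, c') ∉ X) (hbelow : (ρ, c) ∉ X) :
    KMove X (insert (ρ, c) (X.erase (ρ + 1, c))) :=
  ⟨ρ + 1, c, ρ, hρ, Nat.lt_succ_self ρ, hmem, hright, hbelow, fun _ h₁ h₂ => by omega, rfl⟩

theorem KMove.sum_fst_lt {X Y : Diagram} (h : KMove X Y) : Y.sum Prod.fst < X.sum Prod.fst := by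
  obtain ⟨ρ, c, ρ', -, hlt, hmem, -, hnot, -, rfl⟩ := h
  rw [Finset.sum_insert (fun h => hnot (Finset.mem_of_mem_erase h)),
    ← Finset.add_sum_erase _ _ hmem]
  exact Nat.add_lt_add_right hlt _

theorem KReach.sum_fst_le {X Y : Diagram} (h : KReach X Y) : Y.sum Prod.fst ≤ X.sum Prod.fst := by
  induction h with
  | refl => exact le_rfl
  | tail _ hmove ih => exact hmove.sum_fst_lt.le.trans ih

theorem KReach.sum_fst_lt {X Y : Diagram} (h : KReach X Y) (hne : X ≠ Y) :
    Y.sum Prod.fst < X.sum Prod.fst := by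
  obtain rfl | ⟨Z, hXZ, hZY⟩ := h.cases_head
  · exact absurd rfl hne
  · exact (KReach.sum_fst_le hZY).trans_lt hXZ.sum_fst_lt

theorem IsPChain.card_le_sum_fst {D : Diagram} {t : Finset Diagram} (ht : IsPChain KLe (KD D) t) :
    t.card ≤ D.sum Prod.fst + 1 := by
  have hinj : Set.InjOn (fun X : Diagram => X.sum Prod.fst) ↑t := by
    intro X hX Y hY hXY
    by_contra hne
    rcases ht.2 X hX Y hY with h | h
    · exact (KReach.sum_fst_lt h (Ne.symm hne)).ne hXY
    · exact (KReach.sum_fst_lt h hne).ne hXY.symm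
  calc t.card = (t.image fun X : Diagram => X.sum Prod.fst).card :=
        (Finset.card_image_of_injOn hinj).symm
    _ ≤ (Finset.range (D.sum Prod.fst + 1)).card := Finset.card_le_card fun w hw => by
        obtain ⟨X, hX, rfl⟩ := Finset.mem_image.1 hw
        exact Finset.mem_range.2 (Nat.lt_succ_of_le (KReach.sum_fst_le (ht.1 hX)))
    _ = D.sum Prod.fst + 1 := Finset.card_range _

theorem KMove.countAtLeast_column_le {X Y : Diagram} (h : KMove X Y) (c t : ℕ) :
    countAtLeast (column Y c) t ≤ countAtLeast (column X c) t := by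
  obtain ⟨ρ, c₀, ρ', -, hlt, hmem, -, hnot, -, rfl⟩ := h
  rw [column_insert, column_erase]
  split_ifs with hc
  · subst hc
    have := countAtLeast_insert_erase (mem_column.2 hmem) (mt mem_column.1 hnot) t
    split_ifs at this <;> omega
  · exact le_rfl

theorem KReach.countAtLeast_column_le {X Y : Diagram} (h : KReach X Y) (c t : ℕ) :
    countAtLeast (column Y c) t ≤ countAtLeast (column X c) t := by
  induction h with
  | refl => exact le_rfl
  | tail _ hmove ih => exact (hmove.countAtLeast_column_le c t).trans ih

theorem KReach.exists_rightmost_countAtLeast_lt {X Y : Diagram} (h : KReach X Y) (hne : X ≠ Y) :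
    ∃ ρ c, (ρ, c) ∈ X ∧ (∀ c', c < c' → (ρ, c') ∉ X) ∧
      countAtLeast (column Y c) ρ < countAtLeast (column X c) ρ := by
  obtain rfl | ⟨Z, hXZ, hZY⟩ := h.cases_head
  · exact absurd rfl hne
  obtain ⟨ρ, c, ρ', -, hlt, hmem, hright, hnot, -, rfl⟩ := hXZ
  refine ⟨ρ, c, hmem, hright, (KReach.countAtLeast_column_le hZY c ρ).trans_lt ?_⟩
  have := countAtLeast_insert_erase (mem_column.2 hmem) (mt mem_column.1 hnot) ρ
  rw [column_insert, column_erase, if_pos rfl, if_pos rfl]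
  split_ifs at this <;> omega

end Kohnert

section CellPair

variable {B : Diagram} {r c₁ c₂ : ℕ}

def cellPair (B : Diagram) (c₁ c₂ a b : ℕ) : Diagram := insert (a, c₁) (insert (b, c₂) B)

theorem cellPair_erase_erase {X : Diagram} {a b : ℕ} (ha : (a, c₁) ∈ X) (hb : (b, c₂) ∈ X)
    (hc : c₁ ≠ c₂) : cellPair ((X.erase (a, c₁)).erase (b, c₂)) c₁ c₂ a b = X := by
  unfold cellPair
  rw [Finset.insert_erase (Finset.mem_erase.2 ⟨by simp [hc.symm], hb⟩), Finset.insert_erase ha]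

theorem column_cellPair_left (hc : c₁ ≠ c₂) (a b : ℕ) :
    column (cellPair B c₁ c₂ a b) c₁ = insert a (column B c₁) := by
  simp [cellPair, column_insert, hc]

theorem column_cellPair_right (hc : c₁ ≠ c₂) (a b : ℕ) :
    column (cellPair B c₁ c₂ a b) c₂ = insert b (column B c₂) := by
  simp [cellPair, column_insert, hc.symm]

theorem column_cellPair_of_ne {c : ℕ} (hc₁ : c ≠ c₁) (hc₂ : c ≠ c₂) (a b : ℕ) :
    column (cellPair B c₁ c₂ a b) c = column B c := by
  simp [cellPair, column_insert, hc₁, hc₂]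

-- `B` plays the role of `D*` without its cells `(r + 1, c₁)` and `(r + 2, c₂)`.
structure IsPairBase (B : Diagram) (r c₁ c₂ : ℕ) : Prop where
  one_le : 1 ≤ r
  lt : c₁ < c₂
  col_left : ∀ ρ, r ≤ ρ → ρ ≤ r + 1 → (ρ, c₁) ∉ B
  col_right : ∀ ρ, r ≤ ρ → ρ ≤ r + 2 → (ρ, c₂) ∉ B
  row_left : ∀ c, c₁ < c → (r + 1, c) ∉ B
  row_right : ∀ c, c₂ < c → (r + 2, c) ∉ B

theorem isPairBase_erase {X : Diagram} (hr : 1 ≤ r) (hc : c₁ < c₂)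
    (h3 : ∀ c, c₂ < c → (r + 2, c) ∉ X) (h4 : (r, c₂) ∉ X)
    (h5 : ∀ c, c₁ < c → (r + 1, c) ∉ X) (h6 : (r, c₁) ∉ X) :
    IsPairBase ((X.erase (r + 1, c₁)).erase (r + 2, c₂)) r c₁ c₂ where
  one_le := hr
  lt := hc
  col_left ρ h h' hmem := by
    simp only [Finset.mem_erase, ne_eq, Prod.mk.injEq] at hmem
    obtain rfl | rfl : ρ = r ∨ ρ = r + 1 := by omega
    · exact h6 hmem.2.2
    · simp at hmem
  col_right ρ h h' hmem := by
    simp only [Finset.mem_erase, ne_eq, Prod.mk.injEq] at hmem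
    obtain rfl | rfl | rfl : ρ = r ∨ ρ = r + 1 ∨ ρ = r + 2 := by omega
    · exact h4 hmem.2.2
    · exact h5 c₂ hc hmem.2.2
    · simp at hmem
  row_left c h hmem := h5 c h (Finset.mem_of_mem_erase (Finset.mem_of_mem_erase hmem))
  row_right c h hmem := h3 c h (Finset.mem_of_mem_erase (Finset.mem_of_mem_erase hmem))

namespace IsPairBase

theorem kMove_left (hB : IsPairBase B r c₁ c₂) {b : ℕ} (hb : b ≠ r + 1) :
    KMove (cellPair B c₁ c₂ (r + 1) b) (cellPair B c₁ c₂ r b) := by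
  have hnot : (r + 1, c₁) ∉ insert (b, c₂) B := by
    simp [hB.lt.ne, hB.col_left (r + 1) (by omega) le_rfl]
  have hmove := kMove_insert_erase (X := cellPair B c₁ c₂ (r + 1) b) (c := c₁) hB.one_le
    (by simp [cellPair])
    (fun c hc => by
      simp only [cellPair, Finset.mem_insert, Prod.mk.injEq, not_or]
      exact ⟨fun h => by omega, fun h => hb h.1.symm, hB.row_left c hc⟩)
    (by
      simp only [cellPair, Finset.mem_insert, Prod.mk.injEq, not_or]
      exact ⟨fun h => by omega, fun h => hB.lt.ne h.2, hB.col_left r le_rfl (by omega)⟩)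
  rwa [cellPair, Finset.erase_insert hnot] at hmove

theorem kMove_right (hB : IsPairBase B r c₁ c₂) {a ρ : ℕ} (hρ : r ≤ ρ) (hρ' : ρ ≤ r + 1) :
    KMove (cellPair B c₁ c₂ a (ρ + 1)) (cellPair B c₁ c₂ a ρ) := by
  have hnot : (ρ + 1, c₂) ∉ insert (a, c₁) B := by
    simp [hB.lt.ne', hB.col_right (ρ + 1) (by omega) (by omega)]
  have hmove := kMove_insert_erase (X := insert (ρ + 1, c₂) (insert (a, c₁) B)) (c := c₂)
    (hB.one_le.trans hρ) (Finset.mem_insert_self _ _)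
    (fun c hc => by
      simp only [Finset.mem_insert, Prod.mk.injEq, not_or]
      refine ⟨fun h => by omega, fun h => by have := hB.lt; omega, ?_⟩
      obtain h | h : ρ + 1 = r + 1 ∨ ρ + 1 = r + 2 := by omega
      · exact h ▸ hB.row_left c (hB.lt.trans hc)
      · exact h ▸ hB.row_right c hc)
    (by
      simp only [Finset.mem_insert, Prod.mk.injEq, not_or]
      exact ⟨fun h => by omega, fun h => hB.lt.ne' h.2, hB.col_right ρ hρ (by omega)⟩)
  rwa [Finset.erase_insert hnot, Finset.insert_comm, ← Finset.insert_comm (a, c₁)] at hmove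

theorem notMem_column_left (hB : IsPairBase B r c₁ c₂) {ρ : ℕ} (h : r ≤ ρ) (h' : ρ ≤ r + 1) :
    ρ ∉ column B c₁ :=
  mt mem_column.1 (hB.col_left ρ h h')

theorem notMem_column_right (hB : IsPairBase B r c₁ c₂) {ρ : ℕ} (h : r ≤ ρ) (h' : ρ ≤ r + 2) :
    ρ ∉ column B c₂ :=
  mt mem_column.1 (hB.col_right ρ h h')

theorem le_of_kReach (hB : IsPairBase B r c₁ c₂) {a b a' b' : ℕ} (ha : r ≤ a') (ha' : a' ≤ r + 1)
    (hb : r ≤ b') (hb' : b' ≤ r + 2)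
    (h : KReach (cellPair B c₁ c₂ a b) (cellPair B c₁ c₂ a' b')) : a' ≤ a ∧ b' ≤ b := by
  constructor
  · refine le_of_countAtLeast_insert_le (hB.notMem_column_left ha ha') ?_
    simpa only [column_cellPair_left hB.lt.ne] using KReach.countAtLeast_column_le h c₁ a'
  · refine le_of_countAtLeast_insert_le (hB.notMem_column_right hb hb') ?_
    simpa only [column_cellPair_right hB.lt.ne] using KReach.countAtLeast_column_le h c₂ b'

theorem cellPair_ne (hB : IsPairBase B r c₁ c₂) {a b a' b' : ℕ} (ha : r ≤ a') (ha' : a' ≤ r + 1)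
    (hb : r ≤ b') (hb' : b' ≤ r + 2) (hlt : a < a' ∨ b < b') :
    cellPair B c₁ c₂ a b ≠ cellPair B c₁ c₂ a' b' := fun he => by
  have := hB.le_of_kReach ha ha' hb hb' (by rw [he]; exact .refl)
  omega

-- The first move must be made in column `c₁`, the only column in which the two diagrams differ,
-- and by the cell `(r + 1, c₁)`, which is blocked by `(r + 1, c₂)`.
theorem not_kReach_blocked (hB : IsPairBase B r c₁ c₂) :
    ¬ KReach (cellPair B c₁ c₂ (r + 1) (r + 1)) (cellPair B c₁ c₂ r (r + 1)) := by
  intro h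
  obtain ⟨ρ, c, -, hright, hlt⟩ := KReach.exists_rightmost_countAtLeast_lt h
    (hB.cellPair_ne (a := r) (b := r + 1) (by omega) le_rfl (by omega) (by omega)
      (Or.inl (by omega))).symm
  obtain rfl : c = c₁ := by
    by_contra hc
    by_cases hc₂ : c = c₂
    · subst hc₂
      simp only [column_cellPair_right hB.lt.ne, lt_irrefl] at hlt
    · simp only [column_cellPair_of_ne hc hc₂, lt_irrefl] at hlt
  have hρ : ρ ≠ r + 1 := by
    rintro rfl
    exact hright c₂ hB.lt (by simp [cellPair])
  rw [column_cellPair_left hB.lt.ne, column_cellPair_left hB.lt.ne,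
    countAtLeast_insert (hB.notMem_column_left le_rfl (by omega)),
    countAtLeast_insert (hB.notMem_column_left (by omega) le_rfl)] at hlt
  split_ifs at hlt <;> omega

theorem exists_eq_cellPair (hB : IsPairBase B r c₁ c₂) {Z : Diagram}
    (h₁ : KReach (cellPair B c₁ c₂ (r + 1) (r + 2)) Z) (h₂ : KReach Z (cellPair B c₁ c₂ r r)) :
    ∃ a b, r ≤ a ∧ a ≤ r + 1 ∧ r ≤ b ∧ b ≤ r + 2 ∧ Z = cellPair B c₁ c₂ a b := by
  have hlo := fun c t => KReach.countAtLeast_column_le h₂ c t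
  have hhi := fun c t => KReach.countAtLeast_column_le h₁ c t
  obtain ⟨a, ha, ha', hZa⟩ := exists_eq_insert_of_countAtLeast_le (by omega)
    (fun ρ h h' => hB.notMem_column_left h h')
    (by simpa only [column_cellPair_left hB.lt.ne] using hlo c₁)
    (by simpa only [column_cellPair_left hB.lt.ne] using hhi c₁)
  obtain ⟨b, hb, hb', hZb⟩ := exists_eq_insert_of_countAtLeast_le (by omega)
    (fun ρ h h' => hB.notMem_column_right h h')
    (by simpa only [column_cellPair_right hB.lt.ne] using hlo c₂)
    (by simpa only [column_cellPair_right hB.lt.ne] using hhi c₂)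
  refine ⟨a, b, ha, ha', hb, hb', eq_of_column_eq fun c => ?_⟩
  by_cases hc₁ : c = c₁
  · rw [hc₁, hZa, column_cellPair_left hB.lt.ne]
  by_cases hc₂ : c = c₂
  · rw [hc₂, hZb, column_cellPair_right hB.lt.ne]
  rw [column_cellPair_of_ne hc₁ hc₂]
  exact eq_of_countAtLeast_le_of_le
    (by simpa only [column_cellPair_of_ne hc₁ hc₂] using hlo c)
    (by simpa only [column_cellPair_of_ne hc₁ hc₂] using hhi c)

theorem isIntervalSplit (hB : IsPairBase B r c₁ c₂) {D : Diagram}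
    (hD : KReach D (cellPair B c₁ c₂ (r + 1) (r + 2))) :
    IsIntervalSplit KLe (KD D) (cellPair B c₁ c₂ r r) (cellPair B c₁ c₂ (r + 1) (r + 2))
      {cellPair B c₁ c₂ r (r + 1), cellPair B c₁ c₂ r (r + 2)}
      {cellPair B c₁ c₂ (r + 1) r, cellPair B c₁ c₂ (r + 1) (r + 1)} := by
  have e₁ : KReach (cellPair B c₁ c₂ (r + 1) (r + 2)) (cellPair B c₁ c₂ r (r + 2)) :=
    .single (hB.kMove_left (by omega))
  have e₂ : KReach (cellPair B c₁ c₂ r (r + 2)) (cellPair B c₁ c₂ r (r + 1)) :=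
    .single (hB.kMove_right (by omega) le_rfl)
  have e₃ : KReach (cellPair B c₁ c₂ r (r + 1)) (cellPair B c₁ c₂ r r) :=
    .single (hB.kMove_right le_rfl (by omega))
  have f₁ : KReach (cellPair B c₁ c₂ (r + 1) (r + 2)) (cellPair B c₁ c₂ (r + 1) (r + 1)) :=
    .single (hB.kMove_right (by omega) le_rfl)
  have f₂ : KReach (cellPair B c₁ c₂ (r + 1) (r + 1)) (cellPair B c₁ c₂ (r + 1) r) :=
    .single (hB.kMove_right le_rfl (by omega))
  have f₃ : KReach (cellPair B c₁ c₂ (r + 1) r) (cellPair B c₁ c₂ r r) :=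
    .single (hB.kMove_left (by omega))
  refine ⟨?_, ?_, IsChain.pair e₂, IsChain.pair f₂, ?_, ?_⟩
  · rintro _ (rfl | rfl)
    · exact ⟨(hD.trans e₁).trans e₂, e₃, e₁.trans e₂⟩
    · exact ⟨hD.trans e₁, e₂.trans e₃, e₁⟩
  · rintro _ (rfl | rfl)
    · exact ⟨(hD.trans f₁).trans f₂, f₃, f₁.trans f₂⟩
    · exact ⟨hD.trans f₁, f₂.trans f₃, f₁⟩
  · rintro _ (rfl | rfl) _ (rfl | rfl) <;> refine ⟨fun h => ?_, fun h => ?_⟩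
    all_goals first
      | exact hB.not_kReach_blocked h
      | have := hB.le_of_kReach (by omega) (by omega) (by omega) (by omega) h; omega
  · rintro z ⟨-, hz₁, hz₂⟩
    obtain ⟨a, b, ha, ha', hb, hb', rfl⟩ := hB.exists_eq_cellPair hz₂ hz₁
    obtain ha | ha : a = r ∨ a = r + 1 := by omega
    all_goals obtain hb | hb | hb : b = r ∨ b = r + 1 ∨ b = r + 2 := by omega
    all_goals simp [ha, hb]

theorem not_shellable (hB : IsPairBase B r c₁ c₂) {D : Diagram}
    (hD : KReach D (cellPair B c₁ c₂ (r + 1) (r + 2))) : ¬ Shellable KLe (KD D) := by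
  have hsplit := hB.isIntervalSplit hD
  obtain ⟨haP, hbot, -⟩ := hsplit.left_subset (Set.mem_insert _ _)
  exact not_shellable_of_isIntervalSplit (fun t ht => ht.card_le_sum_fst)
    (Relation.ReflTransGen.trans haP hbot) hD hsplit
    (Set.nontrivial_pair (hB.cellPair_ne le_rfl (by omega) (by omega) le_rfl (Or.inr (by omega))))
    (Set.nontrivial_pair (hB.cellPair_ne (by omega) le_rfl (by omega) (by omega)
      (Or.inr (by omega))))

end IsPairBase

end CellPair

theorem stmt_6_general (D Dstar : Diagram) (hstar : KReach D Dstar)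
    (r c1 c2 : ℕ) (hr : 1 ≤ r) (hc : c1 < c2)
    (h1 : (r + 1, c1) ∈ Dstar) (h2 : (r + 2, c2) ∈ Dstar)
    (h3 : ∀ c', c2 < c' → (r + 2, c') ∉ Dstar) (h4 : (r, c2) ∉ Dstar)
    (h5 : ∀ c', c1 < c' → (r + 1, c') ∉ Dstar) (h6 : (r, c1) ∉ Dstar) :
    ¬ Shellable KLe (KD D) := by
  rw [← cellPair_erase_erase h1 h2 hc.ne] at hstar
  exact (isPairBase_erase hr hc h3 h4 h5 h6).not_shellable hstar

/-- If some `D* ∈ P(D)` has cells `(r+1,c₁)` and `(r+2,c₂)` with `c₁ < c₂`, nothing to the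
right of them in their rows, and the positions `(r,c₁)`, `(r,c₂)` empty, then `P(D)` is not
shellable. -/
theorem stmt_6 (D Dstar : Diagram) (hstar : KReach D Dstar)
    (r c1 c2 : ℕ) (hr : 1 ≤ r) (hc1 : 1 ≤ c1) (hc : c1 < c2)
    (h1 : (r + 1, c1) ∈ Dstar) (h2 : (r + 2, c2) ∈ Dstar)
    (h3 : ∀ c', c2 < c' → (r + 2, c') ∉ Dstar) (h4 : (r, c2) ∉ Dstar)
    (h5 : ∀ c', c1 < c' → (r + 1, c') ∉ Dstar) (h6 : (r, c1) ∉ Dstar) :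
    ¬ Shellable KLe (KD D) :=
  stmt_6_general D Dstar hstar r c1 c2 hr hc h1 h2 h3 h4 h5 h6

end KohnertPaper
end
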